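/- Suppose R(x,y) = conj(R(y,x)) for all x,y, choose points x_i ∈ U_i, and let (φ_i)_{i∈I} be a partition of unity subordinate to (U_i): measurable functions with 0 ≤ φ_i ≤ 1, φ_i = 0 outside U_i, and Σ_{i∈I} φ_i(x) = 1 for all x ∈ X. Let F : X → ℂ be measurable such that for every x ∈ X the integral ∫_X R(x,y) F(y) dμ(y) converges absolutely and F(x) = ∫_X R(x,y) F(y) dμ(y). Then for every x ∈ X: | Σ_{i∈I} ( F(x) − conj(Γ(x,x_i)) F(x_i) ) φ_i(x) | ≤ ∫_X |F(y)| osc(y,x) dμ(y). (First pointwise estimate from the proof of Theorem 5.13.) -/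
import Mathlib


open MeasureTheory
open scoped ENNReal NNReal

/-- The oscillation kernel `osc_{𝒰,Γ}(x,y) = sup_{z ∈ Q_y} |R(x,y) − Γ(y,z) R(x,z)|`,
where `Q_y = ⋃_{i : y ∈ U_i} U_i`. -/
noncomputable def osc {X I : Type*} (U : I → Set X) (R Γ : X → X → ℂ) (x y : X) : ℝ≥0∞ :=
  ⨆ z ∈ ⋃ i ∈ {i : I | y ∈ U i}, U i, (‖R x y - Γ y z * R x z‖₊ : ℝ≥0∞)

/-- **First pointwise estimate from the proof of Theorem 5.13.** For a kernel with
`R(x,y) = conj(R(y,x))` reproducing `F`, points `x_i ∈ U_i` and a subordinate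
partition of unity `(φ_i)`:
`|Σ_i (F(x) − conj(Γ(x,x_i)) F(x_i)) φ_i(x)| ≤ ∫_X |F(y)| osc(y,x) dμ(y)`. -/
theorem stmt_17
    {X : Type*} [MeasurableSpace X] (μ : Measure X)
    {I : Type*} [Countable I] (U : I → Set X)
    (hUmeas : ∀ i, MeasurableSet (U i))
    (hUpos : ∀ i, 0 < μ (U i)) (hUfin : ∀ i, μ (U i) < ∞)
    (hcov : ∀ x : X, ∃ i, x ∈ U i)
    (N : ℕ) (hN : ∀ x : X, {i : I | x ∈ U i}.encard ≤ N)
    (R Γ : X → X → ℂ) (hRmeas : Measurable (Function.uncurry R))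
    (hΓ : ∀ x y, ‖Γ x y‖ = 1)
    (hRsymm : ∀ x y, R x y = (starRingEnd ℂ) (R y x))
    (xi : I → X) (hxi : ∀ i, xi i ∈ U i)
    (φ : I → X → ℝ) (hφm : ∀ i, Measurable (φ i))
    (hφ0 : ∀ i x, 0 ≤ φ i x) (hφ1 : ∀ i x, φ i x ≤ 1)
    (hφsupp : ∀ i, ∀ x ∉ U i, φ i x = 0) (hφsum : ∀ x, ∑' i, φ i x = 1)
    (F : X → ℂ) (hFm : Measurable F)
    (hrep : ∀ x, Integrable (fun y => R x y * F y) μ ∧ F x = ∫ y, R x y * F y ∂μ)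
    (x : X) :
    (‖∑' i, (F x - (starRingEnd ℂ) (Γ x (xi i)) * F (xi i)) * (φ i x : ℂ)‖₊ : ℝ≥0∞)
      ≤ ∫⁻ y, (‖F y‖₊ : ℝ≥0∞) * osc U R Γ y x ∂μ := by

  classical
  set c : I → ℂ := fun i => (starRingEnd ℂ) (Γ x (xi i)) with hc
  have hsfin : {i : I | x ∈ U i}.Finite := by
    have h := hN x
    exact Set.finite_of_encard_le_coe h
  set s := hsfin.toFinset with hs
  have hmem : ∀ i, i ∈ s ↔ x ∈ U i := by
    intro i; simp [hs, Set.Finite.mem_toFinset]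
  set RHS := ∫⁻ y, (‖F y‖₊ : ℝ≥0∞) * osc U R Γ y x ∂μ with hRHS
  have hzero : ∀ i ∉ s, (F x - c i * F (xi i)) * (φ i x : ℂ) = 0 := by
    intro i hi
    have hx : x ∉ U i := fun h => hi ((hmem i).mpr h)
    simp [hφsupp i x hx]
  rw [tsum_eq_sum hzero]
  -- per-term bound
  have key : ∀ i ∈ s, (‖F x - c i * F (xi i)‖₊ : ℝ≥0∞) ≤ RHS := by
    intro i hi
    have hxU : x ∈ U i := (hmem i).mp hi
    have hint1 := (hrep x).1
    have hint2 := ((hrep (xi i)).1.const_mul (c i))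
    have heq : F x - c i * F (xi i)
        = ∫ y, (R x y - c i * R (xi i) y) * F y ∂μ := by
      rw [(hrep x).2, (hrep (xi i)).2, ← integral_const_mul,
        ← integral_sub hint1 hint2]
      congr 1; funext y; ring
    rw [heq]
    refine le_trans (enorm_integral_le_lintegral_enorm _) ?_
    refine lintegral_mono fun y => ?_
    have hnorm : (‖R x y - c i * R (xi i) y‖₊ : ℝ≥0∞)
        = (‖R y x - Γ x (xi i) * R y (xi i)‖₊ : ℝ≥0∞) := by
      have : R x y - c i * R (xi i) y
          = (starRingEnd ℂ) (R y x - Γ x (xi i) * R y (xi i)) := by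
        rw [hRsymm x y, hRsymm (xi i) y, map_sub, map_mul]
      rw [this]
      norm_cast
      exact nnnorm_star _
    have hosc : (‖R y x - Γ x (xi i) * R y (xi i)‖₊ : ℝ≥0∞) ≤ osc U R Γ y x := by
      refine le_biSup (fun z => (‖R y x - Γ x z * R y z‖₊ : ℝ≥0∞)) ?_
      exact Set.mem_biUnion (show i ∈ {i : I | x ∈ U i} from hxU) (hxi i)
    calc (‖(R x y - c i * R (xi i) y) * F y‖₊ : ℝ≥0∞)
        = (‖R x y - c i * R (xi i) y‖₊ : ℝ≥0∞) * (‖F y‖₊ : ℝ≥0∞) := by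
          rw [nnnorm_mul]; push_cast; ring
      _ ≤ osc U R Γ y x * (‖F y‖₊ : ℝ≥0∞) := by
          rw [hnorm]; exact mul_le_mul_left hosc _
      _ = (‖F y‖₊ : ℝ≥0∞) * osc U R Γ y x := mul_comm _ _
  have hphisum : ∑ i ∈ s, (‖φ i x‖₊ : ℝ≥0∞) = 1 := by
    have h1 : ∑ i ∈ s, φ i x = 1 := by
      rw [← hφsum x]
      exact (tsum_eq_sum (fun i hi => hφsupp i x (fun h => hi ((hmem i).mpr h)))).symm
    have h2 : ∀ i ∈ s, (‖φ i x‖₊ : ℝ≥0∞) = ENNReal.ofReal (φ i x) := fun i _ =>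
      Real.enorm_eq_ofReal (hφ0 i x)
    rw [Finset.sum_congr rfl h2, ← ENNReal.ofReal_sum_of_nonneg (fun i _ => hφ0 i x),
      h1, ENNReal.ofReal_one]
  calc (‖∑ i ∈ s, (F x - c i * F (xi i)) * (φ i x : ℂ)‖₊ : ℝ≥0∞)
      ≤ ∑ i ∈ s, (‖(F x - c i * F (xi i)) * (φ i x : ℂ)‖₊ : ℝ≥0∞) := by
        rw [← ENNReal.coe_finset_sum]
        exact ENNReal.coe_le_coe.mpr (nnnorm_sum_le _ _)
    _ ≤ ∑ i ∈ s, (‖φ i x‖₊ : ℝ≥0∞) * RHS := by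
        refine Finset.sum_le_sum fun i hi => ?_
        rw [nnnorm_mul]
        push_cast
        rw [Complex.nnnorm_real, mul_comm]
        exact mul_le_mul_right (key i hi) _
    _ = (∑ i ∈ s, (‖φ i x‖₊ : ℝ≥0∞)) * RHS := (Finset.sum_mul _ _ _).symm
    _ = RHS := by rw [hphisum, one_mul]
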